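/- arXiv:2005.12856 — 6 statements merged into one kernel-verified Lean document; each statement's English description precedes it below -/
import Mathlib

section
/- Let X be a compact Hausdorff space and S ⊆ X̄. Then the topological entropy of the closure of S in X̄ equals the topological entropy of S: H^t_X(cls(S)) = H^t_X(S). -/
open Set Filter Topology
open scoped ENNReal

/-- An open cover of a topological space: a family of open sets whose union is the whole space. -/
def IsOpenCover {Z : Type*} [TopologicalSpace Z] (𝒰 : Set (Set Z)) : Prop :=
  (∀ U ∈ 𝒰, IsOpen U) ∧ ⋃₀ 𝒰 = Set.univ

/-- `coverNum S 𝒰` : the minimal cardinality `N_{S/Z}(𝒰)` of a finite subfamily of `𝒰`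
whose union contains `S` (junk value `0` if there is no such finite subfamily). -/
noncomputable def coverNum {Z : Type*} (S : Set Z) (𝒰 : Set (Set Z)) : ℕ :=
  sInf {m | ∃ F : Finset (Set Z), ↑F ⊆ 𝒰 ∧ S ⊆ ⋃₀ (F : Set (Set Z)) ∧ F.card = m}

/-- The cover `𝒰̄ⁿ` of the sequence space `ℕ → Z`, consisting of the sets
`U_{i_0} × ⋯ × U_{i_{n-1}} × Z × Z × ⋯` with the `U_{i_j}` members of `𝒰`. -/
def seqCover {Z : Type*} (𝒰 : Set (Set Z)) (n : ℕ) : Set (Set (ℕ → Z)) :=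
  {V | ∃ U : ℕ → Set Z, (∀ i < n, U i ∈ 𝒰) ∧ V = {x : ℕ → Z | ∀ i < n, x i ∈ U i}}

/-- The topological entropy `H^t(S,𝒰)` of `S ⊆ Z̄ = ℕ → Z` relative to the cover `𝒰`. -/
noncomputable def entropyRel {Z : Type*} (S : Set (ℕ → Z)) (𝒰 : Set (Set Z)) : ℝ≥0∞ :=
  Filter.atTop.limsup fun n : ℕ =>
    ENNReal.ofReal ((1 / n : ℝ) * Real.log (coverNum S (seqCover 𝒰 n)))

/-- The topological entropy `H^t_Z(S)` of `S` as a subset of the sequence space `Z̄ = ℕ → Z`. -/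
noncomputable def topEntropy (Z : Type*) [TopologicalSpace Z] (S : Set (ℕ → Z)) : ℝ≥0∞ :=
  ⨆ (𝒰 : Set (Set Z)) (_ : IsOpenCover 𝒰), entropyRel S 𝒰

section Aux

variable {X : Type*} [TopologicalSpace X]

lemma seqCover_isOpen {𝒰 : Set (Set X)} (h : ∀ U ∈ 𝒰, IsOpen U) {n : ℕ}
    {V : Set (ℕ → X)} (hV : V ∈ seqCover 𝒰 n) : IsOpen V := by
  obtain ⟨U, hU, rfl⟩ := hV
  have heq : {x : ℕ → X | ∀ i < n, x i ∈ U i}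
      = ⋂ i ∈ Finset.range n, (fun x : ℕ → X => x i) ⁻¹' U i := by
    ext x; simp [Finset.mem_range]
  rw [heq]
  exact isOpen_biInter_finset fun i hi =>
    (h _ (hU i (Finset.mem_range.mp hi))).preimage (continuous_apply i)

lemma seqCover_covers {𝒰 : Set (Set X)} (h : IsOpenCover 𝒰) (n : ℕ) :
    (univ : Set (ℕ → X)) ⊆ ⋃₀ seqCover 𝒰 n := by
  intro x _
  have hx : ∀ i : ℕ, ∃ U ∈ 𝒰, x i ∈ U := by
    intro i
    have : x i ∈ ⋃₀ 𝒰 := by rw [h.2]; trivial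
    simpa [mem_sUnion] using this
  choose U hU hxU using hx
  exact ⟨{y | ∀ i < n, y i ∈ U i}, ⟨U, fun i _ => hU i, rfl⟩, fun i _ => hxU i⟩

lemma coverSet_nonempty [CompactSpace X] {𝒰 : Set (Set X)} (h : IsOpenCover 𝒰)
    (S : Set (ℕ → X)) (n : ℕ) :
    {m | ∃ F : Finset (Set (ℕ → X)), ↑F ⊆ seqCover 𝒰 n ∧
      S ⊆ ⋃₀ (F : Set (Set (ℕ → X))) ∧ F.card = m}.Nonempty := by
  have hcov : (univ : Set (ℕ → X)) ⊆ ⋃ V ∈ seqCover 𝒰 n, V := by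
    rw [← sUnion_eq_biUnion]; exact seqCover_covers h n
  obtain ⟨b', hb'sub, hb'fin, hb'cov⟩ := isCompact_univ.elim_finite_subcover_image
    (fun V hV => seqCover_isOpen h.1 hV) hcov
  refine ⟨hb'fin.toFinset.card, hb'fin.toFinset, ?_, ?_, rfl⟩
  · simpa using hb'sub
  · intro x _
    have hx := hb'cov (mem_univ x)
    rw [sUnion_eq_biUnion]
    simpa using hx

lemma coverNum_mono {Z : Type*} {S T : Set Z} {𝒜 : Set (Set Z)} (hST : S ⊆ T)
    (hne : {m | ∃ F : Finset (Set Z), ↑F ⊆ 𝒜 ∧ T ⊆ ⋃₀ (F : Set (Set Z)) ∧ F.card = m}.Nonempty) :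
    coverNum S 𝒜 ≤ coverNum T 𝒜 := by
  obtain ⟨F, hF𝒜, hFT, hFcard⟩ := Nat.sInf_mem hne
  calc coverNum S 𝒜 ≤ F.card := Nat.sInf_le ⟨F, hF𝒜, hST.trans hFT, rfl⟩
  _ = coverNum T 𝒜 := hFcard

lemma coverNum_closure_le {𝒰 𝒱 : Set (Set X)}
    (hmap : ∀ V ∈ 𝒱, ∃ U ∈ 𝒰, closure V ⊆ U) (S : Set (ℕ → X)) (n : ℕ)
    (hne : {m | ∃ F : Finset (Set (ℕ → X)), ↑F ⊆ seqCover 𝒱 n ∧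
      S ⊆ ⋃₀ (F : Set (Set (ℕ → X))) ∧ F.card = m}.Nonempty) :
    coverNum (closure S) (seqCover 𝒰 n) ≤ coverNum S (seqCover 𝒱 n) := by
  obtain ⟨F, hF𝒱, hFS, hFcard⟩ := Nat.sInf_mem hne
  have key : ∀ V' ∈ F, ∃ V'' ∈ seqCover 𝒰 n, closure V' ⊆ V'' := by
    intro V' hV'
    obtain ⟨W, hW, rfl⟩ := hF𝒱 hV'
    have hpick : ∀ i : ℕ, i < n → ∃ U ∈ 𝒰, closure (W i) ⊆ U := fun i hi => hmap _ (hW i hi)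
    choose! U hU1 hU2 using hpick
    refine ⟨{x : ℕ → X | ∀ i < n, x i ∈ U i}, ⟨U, hU1, rfl⟩, ?_⟩
    have hclosed : IsClosed {x : ℕ → X | ∀ i < n, x i ∈ closure (W i)} := by
      have heq : {x : ℕ → X | ∀ i < n, x i ∈ closure (W i)}
          = ⋂ i ∈ Finset.range n, (fun x : ℕ → X => x i) ⁻¹' closure (W i) := by
        ext x; simp [Finset.mem_range]
      rw [heq]
      exact isClosed_biInter fun i _ => isClosed_closure.preimage (continuous_apply i)
    have h1 : closure {x : ℕ → X | ∀ i < n, x i ∈ W i}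
        ⊆ {x : ℕ → X | ∀ i < n, x i ∈ closure (W i)} :=
      closure_minimal (fun x hx i hi => subset_closure (hx i hi)) hclosed
    exact h1.trans fun x hx i hi => hU2 i hi (hx i hi)
  classical
  choose! g hg1 hg2 using key
  refine le_trans (le_trans (Nat.sInf_le ⟨F.image g, ?_, ?_, rfl⟩)
    (Finset.card_image_le)) (le_of_eq hFcard)
  · intro V hV
    simp only [Finset.coe_image, mem_image, Finset.mem_coe] at hV
    obtain ⟨V', hV', rfl⟩ := hV
    exact hg1 V' hV'
  · have h2 : ⋃₀ (F : Set (Set (ℕ → X))) ⊆ ⋃ V' ∈ F, closure V' := by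
      intro x hx
      obtain ⟨V', hV', hxV'⟩ := hx
      exact mem_biUnion hV' (subset_closure hxV')
    have h3 : IsClosed (⋃ V' ∈ (F : Finset (Set (ℕ → X))), closure V') :=
      F.finite_toSet.isClosed_biUnion fun _ _ => isClosed_closure
    have h4 : closure S ⊆ ⋃ V' ∈ F, closure V' :=
      closure_minimal (hFS.trans h2) h3
    refine h4.trans ?_
    intro x hx
    simp only [mem_iUnion, Finset.mem_coe, exists_prop] at hx
    obtain ⟨V', hV', hxV'⟩ := hx
    exact ⟨g V', by simp only [Finset.coe_image]; exact mem_image_of_mem g hV',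
      hg2 V' hV' hxV'⟩

lemma log_natCast_mono {a b : ℕ} (h : a ≤ b) : Real.log a ≤ Real.log b := by
  rcases Nat.eq_zero_or_pos a with rfl | ha
  · rcases Nat.eq_zero_or_pos b with rfl | hb
    · simp
    · simpa using Real.log_nonneg (by exact_mod_cast hb)
  · exact Real.log_le_log (by exact_mod_cast ha) (by exact_mod_cast h)

lemma entropyRel_mono {A B : Set (ℕ → X)} {𝒰 𝒱 : Set (Set X)}
    (h : ∀ n, coverNum A (seqCover 𝒰 n) ≤ coverNum B (seqCover 𝒱 n)) :
    entropyRel A 𝒰 ≤ entropyRel B 𝒱 := by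
  refine Filter.limsup_le_limsup (Filter.Eventually.of_forall fun n => ?_)
  apply ENNReal.ofReal_le_ofReal
  apply mul_le_mul_of_nonneg_left _ (by positivity)
  exact log_natCast_mono (h n)

lemma exists_shrinking [CompactSpace X] [T2Space X] {𝒰 : Set (Set X)} (h : IsOpenCover 𝒰) :
    ∃ 𝒱 : Set (Set X), IsOpenCover 𝒱 ∧ ∀ V ∈ 𝒱, ∃ U ∈ 𝒰, closure V ⊆ U := by
  have hcov : (univ : Set X) ⊆ ⋃ U ∈ 𝒰, U := by
    rw [← sUnion_eq_biUnion, h.2]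
  obtain ⟨t, ht𝒰, htfin, htcov⟩ := isCompact_univ.elim_finite_subcover_image
    (fun U hU => h.1 U hU) hcov
  haveI : Finite ↥t := htfin.to_subtype
  have htcov' : (univ : Set X) ⊆ ⋃ i : ↥t, (i : Set X) := by
    intro x hx
    obtain ⟨U, hU, hxU⟩ := by simpa using htcov hx
    exact mem_iUnion.mpr ⟨⟨U, hU⟩, hxU⟩
  obtain ⟨v, hvcov, hvopen, hvcl⟩ := exists_subset_iUnion_closure_subset isClosed_univ
    (fun i : ↥t => h.1 _ (ht𝒰 i.2)) (fun x _ => Set.toFinite _) htcov'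
  refine ⟨Set.range v, ⟨?_, ?_⟩, ?_⟩
  · rintro V ⟨i, rfl⟩; exact hvopen i
  · apply eq_univ_of_univ_subset
    rw [sUnion_range]
    exact hvcov
  · rintro V ⟨i, rfl⟩; exact ⟨(i : Set X), ht𝒰 i.2, hvcl i⟩

end Aux

theorem topEntropy_closure {X : Type*} [TopologicalSpace X] [CompactSpace X] [T2Space X]
    (S : Set (ℕ → X)) :
    topEntropy X (closure S) = topEntropy X S := by
  apply le_antisymm
  · refine iSup₂_le fun 𝒰 h𝒰 => ?_
    obtain ⟨𝒱, h𝒱, hmap⟩ := exists_shrinking h𝒰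
    refine le_trans (entropyRel_mono fun n => ?_)
      (le_iSup₂ (f := fun 𝒲 (_ : IsOpenCover 𝒲) => entropyRel S 𝒲) 𝒱 h𝒱)
    exact coverNum_closure_le hmap S n (coverSet_nonempty h𝒱 S n)
  · refine iSup₂_le fun 𝒰 h𝒰 => ?_
    refine le_trans (entropyRel_mono fun n => ?_)
      (le_iSup₂ (f := fun 𝒲 (_ : IsOpenCover 𝒲) => entropyRel (closure S) 𝒲) 𝒰 h𝒰)
    exact coverNum_mono subset_closure (coverSet_nonempty h𝒰 (closure S) n)
end

section
/- Let X be an infinite compact Hausdorff space and z ∈ X, and let X̃_z denote the set of sequences (x_n)_{n≥0} in X̄ that are eventually equal to z. Then H^t_X(X̄) = H^t_X(X̃_z) = ∞. -/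
open Set Filter Topology
open scoped ENNReal

section aux
variable {X : Type*} [TopologicalSpace X] [T2Space X] [Infinite X]

noncomputable def markPt (X : Type*) [Infinite X] : ℕ → X := Infinite.natEmbedding X

lemma markPt_inj {X : Type*} [Infinite X] : Function.Injective (markPt X) :=
  (Infinite.natEmbedding X).injective

/-- the j-th cover element for parameter k -/
def covSet (X : Type*) [TopologicalSpace X] [Infinite X] (k j : ℕ) : Set X :=
  {x : X | ∀ i < k, x = markPt X i → i = j}

lemma covSet_open (k j : ℕ) : IsOpen (covSet X k j) := by
  rw [← isClosed_compl_iff]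
  have hfin : (covSet X k j)ᶜ.Finite := by
    apply Set.Finite.subset ((Set.finite_Iio k).image (markPt X))
    intro x hx
    simp only [covSet, mem_compl_iff, mem_setOf_eq, not_forall] at hx
    obtain ⟨i, hik, hxi, _⟩ := hx
    exact ⟨i, hik, hxi.symm⟩
  exact hfin.isClosed

omit [T2Space X] in
lemma mem_covSet_self (k j : ℕ) : markPt X j ∈ covSet X k j := by
  intro i _ h
  exact markPt_inj h.symm

omit [T2Space X] in
lemma covSet_marker {k a b : ℕ} (ha : a < k) (h : markPt X a ∈ covSet X k b) : a = b :=
  h a ha rfl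

lemma covCover_isOpenCover {k : ℕ} (hk : 1 ≤ k) :
    IsOpenCover ((covSet X k) '' (Set.Iio k)) := by
  constructor
  · rintro U ⟨j, -, rfl⟩; exact covSet_open k j
  · apply Set.eq_univ_of_forall
    intro y
    by_cases h : ∃ i < k, y = markPt X i
    · obtain ⟨i, hik, rfl⟩ := h
      exact ⟨covSet X k i, ⟨i, hik, rfl⟩, mem_covSet_self k i⟩
    · push_neg at h
      exact ⟨covSet X k 0, ⟨0, hk, rfl⟩, fun i hik hyi => absurd hyi (h i hik)⟩

omit [T2Space X] in
lemma exists_covSet {k : ℕ} (hk : 1 ≤ k) (y : X) : ∃ j : Fin k, y ∈ covSet X k j := by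
  by_cases h : ∃ i < k, y = markPt X i
  · obtain ⟨i, hik, rfl⟩ := h
    exact ⟨⟨i, hik⟩, mem_covSet_self k i⟩
  · push_neg at h
    exact ⟨⟨0, hk⟩, fun i hik hyi => absurd hyi (h i hik)⟩

omit [T2Space X] in
lemma coverNum_lower {k : ℕ} (hk : 1 ≤ k) (z : X) (S : Set (ℕ → X))
    (hS : {x : ℕ → X | ∃ n₀, ∀ n ≥ n₀, x n = z} ⊆ S) (n : ℕ) :
    k ^ n ≤ coverNum S (seqCover ((covSet X k) '' (Set.Iio k)) n) := by
  set 𝒰 := (covSet X k) '' (Set.Iio k) with h𝒰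
  -- every admissible finset has card ≥ k^n
  have key : ∀ m ∈ {m | ∃ F : Finset (Set (ℕ → X)), ↑F ⊆ seqCover 𝒰 n ∧
      S ⊆ ⋃₀ (F : Set (Set (ℕ → X))) ∧ F.card = m}, k ^ n ≤ m := by
    rintro m ⟨F, hF𝒰, hFcov, rfl⟩
    -- the marker sequences
    set y : (Fin n → Fin k) → (ℕ → X) :=
      fun f i => if h : i < n then markPt X (f ⟨i, h⟩) else z with hy
    have hyS : ∀ f, y f ∈ S := by
      intro f
      apply hS
      exact ⟨n, fun i hi => dif_neg (Nat.not_lt.2 hi)⟩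
    have hyF : ∀ f, ∃ W ∈ F, y f ∈ W := by
      intro f
      obtain ⟨W, hW, hyW⟩ := hFcov (hyS f)
      exact ⟨W, hW, hyW⟩
    choose W hWF hyW using hyF
    have hinj : Function.Injective W := by
      intro f g hfg
      obtain ⟨U, hU𝒰, hUeq⟩ := hF𝒰 (hWF f)
      have hf : ∀ i (h : i < n), markPt X (f ⟨i, h⟩) ∈ U i := by
        intro i h
        have := hyW f
        rw [hUeq] at this
        have := this i h
        simpa [hy, dif_pos h] using this
      have hg : ∀ i (h : i < n), markPt X (g ⟨i, h⟩) ∈ U i := by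
        intro i h
        have := hyW g
        rw [← hfg, hUeq] at this
        have := this i h
        simpa [hy, dif_pos h] using this
      funext i
      obtain ⟨j, hjk, hji⟩ := hU𝒰 i.1 i.2
      apply Fin.ext
      have h1 : (f i : ℕ) = j := by
        apply covSet_marker (X := X) (f i).2
        rw [hji]; exact hf i.1 i.2
      have h2 : (g i : ℕ) = j := by
        apply covSet_marker (X := X) (g i).2
        rw [hji]; exact hg i.1 i.2
      rw [h1, h2]
    have : Fintype.card (Fin n → Fin k) ≤ F.card := by
      rw [← Fintype.card_coe F]
      exact Fintype.card_le_of_injective (fun f => ⟨W f, hWF f⟩)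
        (fun f g h => hinj (congrArg Subtype.val h))
    simpa using this
  -- nonemptiness
  have hne : {m | ∃ F : Finset (Set (ℕ → X)), ↑F ⊆ seqCover 𝒰 n ∧
      S ⊆ ⋃₀ (F : Set (Set (ℕ → X))) ∧ F.card = m}.Nonempty := by
    classical
    set G : (Fin n → Fin k) → Set (ℕ → X) :=
      fun f => {x : ℕ → X | ∀ i : Fin n, x i ∈ covSet X k (f i)} with hG
    refine ⟨_, Finset.image G Finset.univ, ?_, ?_, rfl⟩
    · intro V hV
      simp only [Finset.coe_image, Set.mem_image] at hV
      obtain ⟨f, -, rfl⟩ := hV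
      refine ⟨fun i => if h : i < n then covSet X k (f ⟨i, h⟩) else ∅, ?_, ?_⟩
      · intro i hi
        simp only [dif_pos hi]
        exact ⟨f ⟨i, hi⟩, (f ⟨i, hi⟩).2, rfl⟩
      · ext x
        simp only [hG, mem_setOf_eq]
        constructor
        · intro hx i hi; rw [dif_pos hi]; exact hx ⟨i, hi⟩
        · intro hx i; have := hx i.1 i.2; rwa [dif_pos i.2] at this
    · intro x _
      choose f hf using fun i : Fin n => exists_covSet hk (x i)
      exact ⟨G f, Finset.mem_coe.2 (Finset.mem_image_of_mem G (Finset.mem_univ f)), hf⟩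
  exact key _ (Nat.sInf_mem hne)

lemma entropy_lower [CompactSpace X] {k : ℕ} (hk : 1 ≤ k) (z : X) (S : Set (ℕ → X))
    (hS : {x : ℕ → X | ∃ n₀, ∀ n ≥ n₀, x n = z} ⊆ S) :
    ENNReal.ofReal (Real.log k) ≤ topEntropy X S := by
  have hcov := covCover_isOpenCover (X := X) hk
  refine le_trans ?_ (le_iSup₂ ((covSet X k) '' (Set.Iio k)) hcov)
  apply le_limsup_of_frequently_le'
  rw [frequently_atTop]
  intro a
  refine ⟨max a 1, le_max_left a 1, ?_⟩
  set n := max a 1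
  have hn1 : 1 ≤ n := le_max_right a 1
  have hcn := coverNum_lower hk z S hS n
  apply ENNReal.ofReal_le_ofReal
  have hkn : (1 : ℝ) ≤ (k : ℝ) ^ n := one_le_pow₀ (by exact_mod_cast hk)
  have hc1 : ((k : ℝ) ^ n) ≤ (coverNum S (seqCover ((covSet X k) '' (Set.Iio k)) n) : ℝ) := by
    exact_mod_cast hcn
  have hlog : (n : ℝ) * Real.log k ≤
      Real.log (coverNum S (seqCover ((covSet X k) '' (Set.Iio k)) n)) := by
    calc (n : ℝ) * Real.log k = Real.log ((k : ℝ) ^ n) := (Real.log_pow (k:ℝ) n).symm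
    _ ≤ _ := Real.log_le_log (by linarith) hc1
  have hnpos : (0 : ℝ) < n := by exact_mod_cast hn1
  rw [div_mul_eq_mul_div, one_mul, le_div_iff₀ hnpos]
  linarith [hlog]

end aux

theorem topEntropy_infinite {X : Type*} [TopologicalSpace X] [CompactSpace X] [T2Space X]
    [Infinite X] (z : X) :
    topEntropy X (Set.univ : Set (ℕ → X)) = ⊤ ∧
    topEntropy X {x : ℕ → X | ∃ n₀, ∀ n ≥ n₀, x n = z} = ⊤ := by
  have main : ∀ S : Set (ℕ → X), {x : ℕ → X | ∃ n₀, ∀ n ≥ n₀, x n = z} ⊆ S →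
      topEntropy X S = ⊤ := by
    intro S hS
    by_contra h
    obtain ⟨m, hm⟩ := ENNReal.exists_nat_gt h
    have hle : (m : ℝ≥0∞) ≤ topEntropy X S := by
      set k := max 1 ⌈Real.exp m⌉₊ with hkdef
      have hk : 1 ≤ k := le_max_left _ _
      have hlogk : (m : ℝ) ≤ Real.log k := by
        have h1 : Real.exp m ≤ k := by
          calc Real.exp m ≤ (⌈Real.exp m⌉₊ : ℝ) := Nat.le_ceil _
          _ ≤ k := by exact_mod_cast le_max_right _ _
        calc (m : ℝ) = Real.log (Real.exp m) := (Real.log_exp _).symm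
        _ ≤ Real.log k := Real.log_le_log (Real.exp_pos _) h1
      calc (m : ℝ≥0∞) = ENNReal.ofReal m := by simp [ENNReal.ofReal_natCast]
      _ ≤ ENNReal.ofReal (Real.log k) := ENNReal.ofReal_le_ofReal hlogk
      _ ≤ topEntropy X S := entropy_lower hk z S hS
    exact absurd hle (not_le.2 hm)
  exact ⟨main _ (subset_univ _), main _ subset_rfl⟩
end

section
/- Let X be a compact Hausdorff space, Y a closed subspace of X, and S ⊆ Ȳ. Then the topological entropy of S computed relative to Y equals the topological entropy of S computed relative to X: H^t_Y(S) = H^t_X(S). -/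
open Set Filter Topology
open scoped ENNReal

/-!
The open covers of a nonempty `Y` are exactly the restrictions of open covers of `X`: traces of
open sets are open, and since `Y` is closed every open `V ⊆ Y` is the trace of an open `U ⊇ Yᶜ`.
Restriction along the inclusion is compatible with the covers `𝒰̄ⁿ` and with covering numbers,
so each entropy `H^t(S, 𝒰|_Y)` equals `H^t(S, 𝒰)`, and the two suprema agree.
-/

theorem Nat.sInf_eq_sInf_of_forall_exists_le {A B : Set ℕ}
    (hAB : ∀ a ∈ A, ∃ b ∈ B, b ≤ a) (hBA : ∀ b ∈ B, ∃ a ∈ A, a ≤ b) : sInf A = sInf B := by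
  rcases A.eq_empty_or_nonempty with rfl | hA
  · rcases B.eq_empty_or_nonempty with rfl | ⟨b, hb⟩
    · rfl
    · obtain ⟨a, ha, -⟩ := hBA b hb
      exact ha.elim
  obtain ⟨b, hb, hba⟩ := hAB _ (Nat.sInf_mem hA)
  obtain ⟨a, ha, hab⟩ := hBA _ (Nat.sInf_mem ⟨b, hb⟩)
  exact le_antisymm ((Nat.sInf_le ha).trans hab) ((Nat.sInf_le hb).trans hba)

theorem coverNum_empty {Z : Type*} (𝒰 : Set (Set Z)) : coverNum (∅ : Set Z) 𝒰 = 0 :=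
  Nat.sInf_eq_zero.mpr (Or.inl ⟨∅, by simp, empty_subset _, rfl⟩)

theorem coverNum_image_preimage {A B : Type*} (g : A → B) (S : Set A) (𝒜 : Set (Set B)) :
    coverNum S ((g ⁻¹' ·) '' 𝒜) = coverNum (g '' S) 𝒜 := by
  classical
  refine Nat.sInf_eq_sInf_of_forall_exists_le ?_ ?_
  · rintro _ ⟨G, hG𝒜, hSG, rfl⟩
    have hlift : ∀ V ∈ G, ∃ U ∈ 𝒜, g ⁻¹' U = V := fun V hV => hG𝒜 hV
    choose! lift hlift𝒜 hlift_eq using hlift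
    refine ⟨_, ⟨G.image lift, ?_, ?_, rfl⟩, Finset.card_image_le⟩
    · simpa [Set.subset_def] using hlift𝒜
    · rintro _ ⟨a, ha, rfl⟩
      obtain ⟨V, hVG, haV⟩ := hSG ha
      refine ⟨lift V, by simpa using ⟨V, hVG, rfl⟩, ?_⟩
      rw [← hlift_eq V hVG] at haV
      exact haV
  · rintro _ ⟨F, hF𝒜, hSF, rfl⟩
    refine ⟨_, ⟨F.image (g ⁻¹' ·), ?_, ?_, rfl⟩, Finset.card_image_le⟩
    · rw [Finset.coe_image]
      exact image_mono hF𝒜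
    · intro a ha
      obtain ⟨U, hUF, hgaU⟩ := hSF (mem_image_of_mem g ha)
      exact ⟨g ⁻¹' U, by simpa using ⟨U, hUF, rfl⟩, hgaU⟩

theorem seqCover_image_preimage {Y X : Type*} (f : Y → X) (𝒰 : Set (Set X)) (n : ℕ) :
    seqCover ((f ⁻¹' ·) '' 𝒰) n = ((f ∘ ·) ⁻¹' ·) '' seqCover 𝒰 n := by
  ext W
  constructor
  · rintro ⟨V, hV, rfl⟩
    have hlift : ∀ i, ∃ U, i < n → U ∈ 𝒰 ∧ f ⁻¹' U = V i := fun i =>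
      if hi : i < n then (hV i hi).imp fun _ hU _ => hU else ⟨∅, fun h => (hi h).elim⟩
    choose U hU using hlift
    refine ⟨{x | ∀ i < n, x i ∈ U i}, ⟨U, fun i hi => (hU i hi).1, rfl⟩, ?_⟩
    ext u
    refine forall₂_congr fun i hi => ?_
    rw [← (hU i hi).2]
    rfl
  · rintro ⟨_, ⟨U, hU, rfl⟩, rfl⟩
    exact ⟨(f ⁻¹' U ·), fun i hi => mem_image_of_mem _ (hU i hi), rfl⟩

theorem entropyRel_image_preimage {Y X : Type*} (f : Y → X) (S : Set (ℕ → Y))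
    (𝒰 : Set (Set X)) : entropyRel S ((f ⁻¹' ·) '' 𝒰) = entropyRel ((f ∘ ·) '' S) 𝒰 := by
  simp only [entropyRel, seqCover_image_preimage, coverNum_image_preimage]

theorem topEntropy_empty (Z : Type*) [TopologicalSpace Z] : topEntropy Z ∅ = 0 := by
  simp [topEntropy, entropyRel, coverNum_empty]

theorem IsOpenCover.preimage {Y X : Type*} [TopologicalSpace Y] [TopologicalSpace X]
    {𝒰 : Set (Set X)} (h𝒰 : IsOpenCover 𝒰) {f : Y → X} (hf : Continuous f) :
    IsOpenCover ((f ⁻¹' ·) '' 𝒰) := by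
  refine ⟨?_, ?_⟩
  · rintro _ ⟨U, hU, rfl⟩
    exact (h𝒰.1 U hU).preimage hf
  · rw [sUnion_image, ← preimage_iUnion₂, ← sUnion_eq_biUnion, h𝒰.2, preimage_univ]

theorem IsClosed.exists_isOpenCover_preimage_val_eq {X : Type*} [TopologicalSpace X]
    {Y : Set X} (hY : IsClosed Y) [Nonempty Y] {𝒱 : Set (Set Y)} (h𝒱 : IsOpenCover 𝒱) :
    ∃ 𝒰 : Set (Set X), IsOpenCover 𝒰 ∧ ((Subtype.val ⁻¹' ·) '' 𝒰) = 𝒱 := by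
  have hext : ∀ V ∈ 𝒱, ∃ U : Set X, IsOpen U ∧ Yᶜ ⊆ U ∧ Subtype.val ⁻¹' U = V := by
    intro V hV
    obtain ⟨U, hU, rfl⟩ := isOpen_induced_iff.mp (h𝒱.1 V hV)
    refine ⟨U ∪ Yᶜ, hU.union hY.isOpen_compl, subset_union_right, ?_⟩
    ext y
    simp
  refine ⟨{U | IsOpen U ∧ Yᶜ ⊆ U ∧ Subtype.val ⁻¹' U ∈ 𝒱}, ⟨fun U hU => hU.1, ?_⟩, ?_⟩
  · refine eq_univ_of_forall fun x => ?_
    by_cases hx : x ∈ Y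
    · obtain ⟨V, hV, hxV⟩ := mem_sUnion.mp (h𝒱.2.symm ▸ mem_univ (⟨x, hx⟩ : Y))
      obtain ⟨U, hU, hYU, rfl⟩ := hext V hV
      exact ⟨U, ⟨hU, hYU, hV⟩, hxV⟩
    · obtain ⟨V, hV, -⟩ := mem_sUnion.mp (h𝒱.2.symm ▸ mem_univ (Classical.arbitrary Y))
      obtain ⟨U, hU, hYU, rfl⟩ := hext V hV
      exact ⟨U, ⟨hU, hYU, hV⟩, hYU hx⟩
  · refine subset_antisymm (image_subset_iff.mpr fun U hU => hU.2.2) fun V hV => ?_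
    obtain ⟨U, hU, hYU, rfl⟩ := hext V hV
    exact ⟨U, ⟨hU, hYU, hV⟩, rfl⟩

theorem topEntropy_subspace_general {X : Type*} [TopologicalSpace X]
    (Y : Set X) (hY : IsClosed Y) (S : Set (ℕ → Y)) :
    topEntropy Y S = topEntropy X ((fun u : ℕ → Y => fun n => (u n : X)) '' S) := by
  change topEntropy Y S = topEntropy X ((Subtype.val ∘ ·) '' S)
  rcases isEmpty_or_nonempty Y with _ | _
  · rw [eq_empty_of_isEmpty S, image_empty, topEntropy_empty, topEntropy_empty]
  apply le_antisymm
  · refine iSup₂_le fun 𝒱 h𝒱 => ?_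
    obtain ⟨𝒰, h𝒰, rfl⟩ := hY.exists_isOpenCover_preimage_val_eq h𝒱
    rw [entropyRel_image_preimage]
    exact le_iSup₂ (f := fun 𝒰 (_ : IsOpenCover 𝒰) => entropyRel _ 𝒰) 𝒰 h𝒰
  · refine iSup₂_le fun 𝒰 h𝒰 => ?_
    rw [← entropyRel_image_preimage]
    exact le_iSup₂ (f := fun 𝒱 (_ : IsOpenCover 𝒱) => entropyRel S 𝒱) _
      (h𝒰.preimage continuous_subtype_val)

theorem topEntropy_subspace {X : Type*} [TopologicalSpace X] [CompactSpace X] [T2Space X]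
    (Y : Set X) (hY : IsClosed Y) (S : Set (ℕ → Y)) :
    topEntropy Y S = topEntropy X ((fun u : ℕ → Y => fun n => (u n : X)) '' S) :=
  topEntropy_subspace_general Y hY S
end

section
/- Let X be a compact Hausdorff space. Then every extended real number u with 0 ≤ u ≤ log|X| appears as the topological entropy of some subset of X̄; that is, for every such u there exists S ⊆ X̄ with H^t_X(S) = u. -/
/-
For finite sets `t i ⊆ T ⊆ X`, the box `∏ i, t i ⊆ X̄` is covered by `∏_{i<n} |t i|` members of
`𝒰̄ⁿ` for any cover `𝒰` (one cylinder per prefix), and needs that many for the cover by the sets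
`X \ (T \ {x})`, `x ∈ T`, each of which meets `T` in a single point. So the entropy of the box is
the growth rate of `∏_{i<n} |t i|`. Taking `t i = T` at the `⌊d n⌋₊` times `i < n` where
`i ↦ ⌊d i⌋₊` jumps, and a singleton elsewhere, yields entropy `d log |T|` for every `d ∈ [0, 1]`.
The value `⊤` is attained by `X̄` itself when `X` is infinite, as it contains such boxes for
arbitrarily large `T`; the value `0` by the empty set.
-/

open Set Filter Topology
open scoped ENNReal

namespace SeqEntropy

variable {X : Type*}

section CoverNum

variable {S S' : Set X} {𝒰 : Set (Set X)}

lemma coverNum_le_card {F : Finset (Set X)} (hF : ↑F ⊆ 𝒰) (hS : S ⊆ ⋃₀ ↑F) :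
    coverNum S 𝒰 ≤ F.card :=
  Nat.sInf_le ⟨F, hF, hS, rfl⟩

lemma coverNum_empty : coverNum (∅ : Set X) 𝒰 = 0 :=
  Nat.le_zero.1 (coverNum_le_card (F := ∅) (by simp) (empty_subset _))

lemma exists_finset_card_eq_coverNum (h : ∃ F : Finset (Set X), ↑F ⊆ 𝒰 ∧ S ⊆ ⋃₀ ↑F) :
    ∃ F : Finset (Set X), ↑F ⊆ 𝒰 ∧ S ⊆ ⋃₀ ↑F ∧ F.card = coverNum S 𝒰 := by
  obtain ⟨F, hF, hSF⟩ := h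
  exact Nat.sInf_mem (s := {m | ∃ F : Finset (Set X), ↑F ⊆ 𝒰 ∧ S ⊆ ⋃₀ ↑F ∧ F.card = m})
    ⟨F.card, F, hF, hSF, rfl⟩

lemma coverNum_mono (hSS' : S ⊆ S') (h : ∃ F : Finset (Set X), ↑F ⊆ 𝒰 ∧ S' ⊆ ⋃₀ ↑F) :
    coverNum S 𝒰 ≤ coverNum S' 𝒰 := by
  obtain ⟨F, hF, hS'F, hcard⟩ := exists_finset_card_eq_coverNum h
  exact hcard ▸ coverNum_le_card hF (hSS'.trans hS'F)

end CoverNum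

lemma coverNum_pi_le_prod_card {𝒰 : Set (Set X)} (h𝒰 : ⋃₀ 𝒰 = univ) (t : ℕ → Finset X) (n : ℕ) :
    coverNum (univ.pi fun i => (t i : Set X)) (seqCover 𝒰 n) ≤
      ∏ i ∈ Finset.range n, (t i).card := by
  classical
  choose g hg𝒰 hg using fun x : X => mem_sUnion.1 (h𝒰.symm ▸ mem_univ x)
  let cyl : (∀ i ∈ Finset.range n, X) → Set (ℕ → X) := fun w =>
    {y | ∀ i < n, y i ∈ if hi : i ∈ Finset.range n then g (w i hi) else univ}
  have hcyl : ∀ w, cyl w ∈ seqCover 𝒰 n := fun w =>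
    ⟨_, fun i hi => by simpa [Finset.mem_range.2 hi] using hg𝒰 _, rfl⟩
  have hcover : (univ.pi fun i => (t i : Set X)) ⊆ ⋃₀ ↑(((Finset.range n).pi t).image cyl) := by
    intro x hx
    refine ⟨cyl fun i _ => x i, by simpa using ⟨_, fun i _ => hx i trivial, rfl⟩, fun i hi => ?_⟩
    simpa [Finset.mem_range.2 hi] using hg (x i)
  calc coverNum _ (seqCover 𝒰 n) ≤ (((Finset.range n).pi t).image cyl).card :=
        coverNum_le_card (by simpa [subset_def] using fun w _ => hcyl w) hcover
    _ ≤ ((Finset.range n).pi t).card := Finset.card_image_le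
    _ = ∏ i ∈ Finset.range n, (t i).card := Finset.card_pi _ _

def isolatingCover (T : Finset X) : Set (Set X) :=
  (fun x => ((T : Set X) \ {x})ᶜ) '' T

lemma inter_subsingleton_of_mem_isolatingCover {T : Finset X} {U : Set X}
    (hU : U ∈ isolatingCover T) : (U ∩ T).Subsingleton := by
  obtain ⟨x, -, rfl⟩ := hU
  have key : ∀ y ∈ ((T : Set X) \ {x})ᶜ ∩ T, y = x := fun y ⟨hyU, hyT⟩ =>
    not_not.1 fun hyx => hyU ⟨hyT, hyx⟩
  exact fun y hy z hz => (key y hy).trans (key z hz).symm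

/-- `entropyRel S 𝒰` is definitionally `growthRate fun n => coverNum S (seqCover 𝒰 n)`. -/
noncomputable def growthRate (K : ℕ → ℕ) : ℝ≥0∞ :=
  atTop.limsup fun n : ℕ => ENNReal.ofReal ((1 / n : ℝ) * Real.log (K n))

lemma growthRate_mono {K L : ℕ → ℕ} (h : ∀ n, K n ≤ L n) : growthRate K ≤ growthRate L := by
  refine limsup_le_limsup (.of_forall fun n => ?_) isCobounded_le_of_bot isBounded_le_of_top
  refine ENNReal.ofReal_le_ofReal (mul_le_mul_of_nonneg_left ?_ (by positivity))
  rcases (K n).eq_zero_or_pos with hK | hK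
  · simpa [hK] using Real.log_natCast_nonneg (L n)
  · exact Real.log_le_log (by exact_mod_cast hK) (by exact_mod_cast h n)

lemma growthRate_pow_floor_mul (k : ℕ) {d : ℝ} (hd : 0 ≤ d) :
    growthRate (fun n => k ^ ⌊d * n⌋₊) = ENNReal.ofReal (d * Real.log k) := by
  have hlim : Tendsto (fun n : ℕ => (1 / n : ℝ) * Real.log ((k ^ ⌊d * n⌋₊ : ℕ) : ℝ)) atTop
      (𝓝 (d * Real.log k)) := by
    have := ((tendsto_nat_floor_mul_div_atTop hd).comp tendsto_natCast_atTop_atTop).mul_const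
      (Real.log k)
    refine this.congr fun n => ?_
    simp only [Function.comp_apply, Nat.cast_pow, Real.log_pow]
    ring
  exact ((ENNReal.continuous_ofReal.tendsto _).comp hlim).limsup_eq

lemma tendsto_ofReal_log_natCast_atTop :
    Tendsto (fun k : ℕ => ENNReal.ofReal (Real.log k)) atTop (𝓝 ⊤) :=
  ENNReal.tendsto_ofReal_atTop.comp (Real.tendsto_log_atTop.comp tendsto_natCast_atTop_atTop)

noncomputable def floorJumpBox (T : Finset X) (x₀ : X) (d : ℝ) (i : ℕ) : Finset X :=
  if ⌊d * i⌋₊ < ⌊d * (i + 1)⌋₊ then T else {x₀}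

lemma prod_card_floorJumpBox (T : Finset X) (x₀ : X) {d : ℝ} (hd0 : 0 ≤ d) (hd1 : d ≤ 1)
    (n : ℕ) : ∏ i ∈ Finset.range n, (floorJumpBox T x₀ d i).card = T.card ^ ⌊d * n⌋₊ := by
  induction n with
  | zero => simp
  | succ n ih =>
    have hmono : ⌊d * n⌋₊ ≤ ⌊d * (n + 1)⌋₊ := Nat.floor_le_floor (by nlinarith)
    have hstep : ⌊d * (n + 1)⌋₊ ≤ ⌊d * n⌋₊ + 1 := by
      rw [← Nat.floor_add_one (by positivity)]
      exact Nat.floor_le_floor (by nlinarith)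
    rw [Finset.prod_range_succ, ih, floorJumpBox, Nat.cast_succ]
    split_ifs with hjump
    · rw [show ⌊d * (n + 1)⌋₊ = ⌊d * n⌋₊ + 1 by omega, pow_succ]
    · rw [show ⌊d * (n + 1)⌋₊ = ⌊d * n⌋₊ by omega, Finset.card_singleton, mul_one]

open scoped Classical in
lemma exists_finset_le_ofReal_log_card {u : ℝ≥0∞}
    (hu : u ≤ if Finite X then ENNReal.ofReal (Real.log (Nat.card X)) else ⊤) (hutop : u ≠ ⊤) :
    ∃ T : Finset X, u ≤ ENNReal.ofReal (Real.log T.card) := by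
  by_cases hfin : Finite X
  · have := Fintype.ofFinite X
    exact ⟨Finset.univ, by simpa [hfin, Nat.card_eq_fintype_card] using hu⟩
  · have := not_finite_iff_infinite.1 hfin
    obtain ⟨k, hk⟩ :=
      (tendsto_ofReal_log_natCast_atTop.eventually (lt_mem_nhds hutop.lt_top)).exists
    obtain ⟨T, rfl⟩ := Infinite.exists_subset_card_eq X k
    exact ⟨T, hk.le⟩

variable [TopologicalSpace X]

lemma isOpen_of_mem_seqCover {𝒰 : Set (Set X)} (h𝒰 : ∀ U ∈ 𝒰, IsOpen U) {n : ℕ}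
    {V : Set (ℕ → X)} (hV : V ∈ seqCover 𝒰 n) : IsOpen V := by
  obtain ⟨U, hU, rfl⟩ := hV
  exact isOpen_set_pi (finite_Iio n) fun i hi => h𝒰 _ (hU i hi)

lemma exists_finset_subset_seqCover_covering [CompactSpace X] {𝒰 : Set (Set X)}
    (h𝒰 : IsOpenCover 𝒰) (n : ℕ) (S : Set (ℕ → X)) :
    ∃ F : Finset (Set (ℕ → X)), ↑F ⊆ seqCover 𝒰 n ∧ S ⊆ ⋃₀ ↑F := by
  have hcover : univ ⊆ ⋃ V ∈ seqCover 𝒰 n, id V := by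
    intro x _
    choose g hg𝒰 hg using fun y : X => mem_sUnion.1 (h𝒰.2.symm ▸ mem_univ y)
    have hV : {y : ℕ → X | ∀ i < n, y i ∈ g (x i)} ∈ seqCover 𝒰 n :=
      ⟨fun i => g (x i), fun i _ => hg𝒰 _, rfl⟩
    exact mem_biUnion hV fun i _ => hg (x i)
  obtain ⟨F, hF𝒰, hF, hcov⟩ := isCompact_univ.elim_finite_subcover_image
    (fun V hV => isOpen_of_mem_seqCover h𝒰.1 hV) hcover
  exact ⟨hF.toFinset, by simpa using hF𝒰, fun x _ => by simpa using hcov (mem_univ x)⟩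

lemma isOpenCover_isolatingCover [T1Space X] {T : Finset X} (hT : T.Nonempty) :
    IsOpenCover (isolatingCover T) := by
  refine ⟨?_, ?_⟩
  · rintro _ ⟨x, -, rfl⟩
    exact ((T.finite_toSet.subset sdiff_subset).isClosed).isOpen_compl
  · refine eq_univ_of_forall fun y => ?_
    by_cases hy : y ∈ T
    · exact ⟨_, mem_image_of_mem _ hy, fun h => h.2 rfl⟩
    · obtain ⟨x, hx⟩ := hT
      exact ⟨_, mem_image_of_mem _ hx, fun h => hy h.1⟩

lemma topEntropy_empty : topEntropy X (∅ : Set (ℕ → X)) = 0 := by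
  simp [topEntropy, entropyRel, coverNum_empty]

lemma topEntropy_mono [CompactSpace X] {S S' : Set (ℕ → X)} (h : S ⊆ S') :
    topEntropy X S ≤ topEntropy X S' :=
  iSup₂_mono fun _ h𝒰 => growthRate_mono fun n =>
    coverNum_mono h (exists_finset_subset_seqCover_covering h𝒰 n S')

lemma prod_card_le_coverNum_pi [CompactSpace X] [T1Space X] {T : Finset X} {t : ℕ → Finset X}
    (htT : ∀ i, t i ⊆ T) (ht : ∀ i, (t i).Nonempty) (n : ℕ) :
    ∏ i ∈ Finset.range n, (t i).card ≤
      coverNum (univ.pi fun i => (t i : Set X)) (seqCover (isolatingCover T) n) := by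
  obtain ⟨F, hF, hSF, hcard⟩ := exists_finset_card_eq_coverNum <|
    exists_finset_subset_seqCover_covering (isOpenCover_isolatingCover ((ht 0).mono (htT 0))) n
      (univ.pi fun i => (t i : Set X))
  let extend : (∀ i ∈ Finset.range n, X) → ℕ → X := fun w i =>
    if hi : i ∈ Finset.range n then w i hi else (ht i).choose
  have hextend : ∀ w ∈ (Finset.range n).pi t, extend w ∈ univ.pi fun i => (t i : Set X) := by
    intro w hw i _
    by_cases hi : i ∈ Finset.range n
    · simpa only [extend, dif_pos hi, Finset.mem_coe] using Finset.mem_pi.1 hw i hi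
    · simpa only [extend, dif_neg hi, Finset.mem_coe] using (ht i).choose_spec
  -- The points of the box lying in one member of the cover all share their prefix, so `V` is
  -- injective on prefixes.
  choose! V hVF hV using fun w hw => mem_sUnion.1 (hSF (hextend w hw))
  rw [← Finset.card_pi, ← hcard]
  refine Finset.card_le_card_of_injOn V hVF fun w hw w' hw' hVV => funext₂ fun i hi => ?_
  obtain ⟨U, hU, hVU⟩ := hF (hVF w hw)
  have hn : i < n := Finset.mem_range.1 hi
  have hUw : extend w i ∈ U i := (hVU ▸ hV w hw : extend w ∈ {x | ∀ i < n, x i ∈ U i}) i hn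
  have hUw' : extend w' i ∈ U i :=
    (hVU ▸ hVV ▸ hV w' hw' : extend w' ∈ {x | ∀ i < n, x i ∈ U i}) i hn
  have hT : ∀ w ∈ (Finset.range n).pi t, extend w i ∈ T := fun w hw =>
    htT i (hextend w hw i trivial)
  simpa only [extend, dif_pos hi] using
    inter_subsingleton_of_mem_isolatingCover (hU i hn) ⟨hUw, hT w hw⟩ ⟨hUw', hT w' hw'⟩

theorem topEntropy_pi_eq_growthRate [CompactSpace X] [T1Space X] {T : Finset X}
    {t : ℕ → Finset X} (htT : ∀ i, t i ⊆ T) (ht : ∀ i, (t i).Nonempty) :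
    topEntropy X (univ.pi fun i => (t i : Set X)) =
      growthRate fun n => ∏ i ∈ Finset.range n, (t i).card :=
  le_antisymm (iSup₂_le fun _ h𝒰 => growthRate_mono (coverNum_pi_le_prod_card h𝒰.2 t))
    (le_iSup₂_of_le (isolatingCover T) (isOpenCover_isolatingCover ((ht 0).mono (htT 0)))
      (growthRate_mono (prod_card_le_coverNum_pi htT ht)))

theorem topEntropy_pi_floorJumpBox [CompactSpace X] [T1Space X] {T : Finset X} {x₀ : X}
    (hx₀ : x₀ ∈ T) {d : ℝ} (hd0 : 0 ≤ d) (hd1 : d ≤ 1) :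
    topEntropy X (univ.pi fun i => (floorJumpBox T x₀ d i : Set X)) =
      ENNReal.ofReal (d * Real.log T.card) := by
  have hsub : ∀ i, floorJumpBox T x₀ d i ⊆ T := fun i => by
    unfold floorJumpBox; split_ifs <;> simp [hx₀]
  have hne : ∀ i, (floorJumpBox T x₀ d i).Nonempty := fun i => by
    unfold floorJumpBox; split_ifs; exacts [⟨x₀, hx₀⟩, Finset.singleton_nonempty x₀]
  rw [topEntropy_pi_eq_growthRate hsub hne]
  simp_rw [prod_card_floorJumpBox T x₀ hd0 hd1]
  exact growthRate_pow_floor_mul T.card hd0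

theorem topEntropy_univ_of_infinite [CompactSpace X] [T1Space X] [Infinite X] :
    topEntropy X univ = ⊤ := by
  refine eq_top_iff.2 (le_of_tendsto' tendsto_ofReal_log_natCast_atTop fun k => ?_)
  rcases k.eq_zero_or_pos with rfl | hk
  · simp
  obtain ⟨T, rfl⟩ := Infinite.exists_subset_card_eq X k
  obtain ⟨x₀, hx₀⟩ := Finset.card_pos.1 hk
  calc ENNReal.ofReal (Real.log T.card)
      = topEntropy X (univ.pi fun i => (floorJumpBox T x₀ 1 i : Set X)) := by
        rw [topEntropy_pi_floorJumpBox hx₀ zero_le_one le_rfl, one_mul]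
    _ ≤ topEntropy X univ := topEntropy_mono (subset_univ _)

end SeqEntropy

open SeqEntropy

open scoped Classical in
theorem topEntropy_surjects_onto_interval {X : Type*} [TopologicalSpace X] [CompactSpace X]
    [T2Space X] (u : ℝ≥0∞)
    (hu : u ≤ if Finite X then ENNReal.ofReal (Real.log (Nat.card X)) else ⊤) :
    ∃ S : Set (ℕ → X), topEntropy X S = u := by
  rcases eq_or_ne u 0 with rfl | hu0
  · exact ⟨∅, topEntropy_empty⟩
  rcases eq_or_ne u ⊤ with rfl | hutop
  · have : Infinite X := not_finite_iff_infinite.1 fun h => by simp [h] at hu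
    exact ⟨univ, topEntropy_univ_of_infinite⟩
  obtain ⟨T, hTu⟩ := exists_finset_le_ofReal_log_card hu hutop
  have hlog : 0 < Real.log T.card := by
    by_contra h
    exact hu0 (le_zero_iff.1 (hTu.trans (ENNReal.ofReal_eq_zero.2 (not_lt.1 h)).le))
  obtain ⟨x₀, hx₀⟩ : T.Nonempty := Finset.nonempty_iff_ne_empty.2 fun h => by simp [h] at hlog
  have hd1 : u.toReal / Real.log T.card ≤ 1 :=
    (div_le_one hlog).2 (ENNReal.toReal_le_of_le_ofReal hlog.le hTu)
  refine ⟨_, (topEntropy_pi_floorJumpBox hx₀ (by positivity) hd1).trans ?_⟩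
  rw [div_mul_cancel₀ _ hlog.ne', ENNReal.ofReal_toReal hutop]
end

section
/- Let X be a compact Hausdorff space, S ⊆ X̄ and k ≥ 2. Let the k-dilation of S be 𝔇ᵏS = {(x_0,…,x_0,x_1,…,x_1,…) : (x_n)_{n≥0} ∈ S}, where each term x_n of the original sequence is repeated k times consecutively. Then H^t_X(𝔇ᵏS) = (1/k) · H^t_X(S). -/
open Set Filter Topology
open scoped ENNReal

/-!
Dilating by `k` stretches every time step to `k` steps. Reindexing cylinders along `i ↦ i / k`,
and sampling a dilated sequence at the multiples of `k`, shows that covering `𝔇ᵏS` by cylinders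
of length `k m` costs exactly as much as covering `S` by cylinders of length `m`. Since the
covering numbers grow with the length, the upper exponential growth rate of those of `𝔇ᵏS`
is `1 / k` times that of `S`, for every open cover.
-/

open ExpGrowth

lemma isOpenCover_seqCover {X : Type*} [TopologicalSpace X] {𝒰 : Set (Set X)}
    (h𝒰 : IsOpenCover 𝒰) (n : ℕ) : IsOpenCover (seqCover 𝒰 n) := by
  refine ⟨?_, eq_univ_of_forall fun x => ?_⟩
  · rintro _ ⟨U, hU, rfl⟩
    simp only [ofPred_forall]
    exact (finite_lt_nat n).isOpen_biInter fun i hi =>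
      (h𝒰.1 _ (hU i hi)).preimage (continuous_apply i)
  · choose U hU hxU using fun i => mem_sUnion.1 (h𝒰.2.symm ▸ mem_univ (x i))
    exact ⟨_, ⟨U, fun i _ => hU i, rfl⟩, fun i _ => hxU i⟩

lemma IsOpenCover.exists_finset_subcover {Z : Type*} [TopologicalSpace Z] [CompactSpace Z]
    {𝒰 : Set (Set Z)} (h𝒰 : IsOpenCover 𝒰) (S : Set Z) :
    ∃ F : Finset (Set Z), ↑F ⊆ 𝒰 ∧ S ⊆ ⋃₀ (F : Set (Set Z)) := by
  obtain ⟨𝒱, h𝒱𝒰, h𝒱, hcover⟩ := isCompact_univ.elim_finite_subcover_image (b := 𝒰) (c := id)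
    h𝒰.1 (by simp [← sUnion_eq_biUnion, h𝒰.2])
  exact ⟨h𝒱.toFinset, by simpa using h𝒱𝒰,
    (subset_univ S).trans (by simpa [← sUnion_eq_biUnion] using hcover)⟩

section coverNum

variable {Z W : Type*} {S : Set Z} {𝒱 : Set (Set Z)}

lemma coverNum_le_card {F : Finset (Set Z)} (hF : ↑F ⊆ 𝒱) (hS : S ⊆ ⋃₀ (F : Set (Set Z))) :
    coverNum S 𝒱 ≤ F.card :=
  Nat.sInf_le ⟨F, hF, hS, rfl⟩

lemma exists_card_eq_coverNum (h : ∃ F : Finset (Set Z), ↑F ⊆ 𝒱 ∧ S ⊆ ⋃₀ (F : Set (Set Z))) :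
    ∃ F : Finset (Set Z), ↑F ⊆ 𝒱 ∧ S ⊆ ⋃₀ (F : Set (Set Z)) ∧ F.card = coverNum S 𝒱 := by
  obtain ⟨F, hF𝒱, hSF⟩ := h
  have hne : {m | ∃ F : Finset (Set Z), ↑F ⊆ 𝒱 ∧ S ⊆ ⋃₀ (F : Set (Set Z)) ∧ F.card = m}.Nonempty :=
    ⟨F.card, F, hF𝒱, hSF, rfl⟩
  exact Nat.sInf_mem hne

lemma coverNum_image_le {𝒲 : Set (Set W)} (f : Z → W)
    (hS : ∃ F : Finset (Set Z), ↑F ⊆ 𝒱 ∧ S ⊆ ⋃₀ (F : Set (Set Z)))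
    (h : ∀ V ∈ 𝒱, ∃ V' ∈ 𝒲, f '' V ⊆ V') :
    coverNum (f '' S) 𝒲 ≤ coverNum S 𝒱 := by
  classical
  obtain ⟨F, hF𝒱, hSF, hcard⟩ := exists_card_eq_coverNum hS
  choose! Φ hΦ𝒲 hfΦ using h
  rw [← hcard]
  refine (coverNum_le_card (F := F.image Φ) ?_ ?_).trans Finset.card_image_le
  · simpa [subset_def] using fun V hV => hΦ𝒲 V (hF𝒱 hV)
  · rintro _ ⟨x, hx, rfl⟩
    obtain ⟨V, hVF, hxV⟩ := hSF hx
    exact ⟨Φ V, Finset.mem_image_of_mem Φ hVF, hfΦ V (hF𝒱 hVF) ⟨x, hxV, rfl⟩⟩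

end coverNum

section reindex

variable {X : Type*} {𝒰 : Set (Set X)} {σ : ℕ → ℕ} {m n : ℕ}

lemma exists_seqCover_image_comp_subset (hσ : ∀ i < n, σ i < m) :
    ∀ V ∈ seqCover 𝒰 m, ∃ V' ∈ seqCover 𝒰 n, (fun x : ℕ → X => x ∘ σ) '' V ⊆ V' := by
  rintro _ ⟨U, hU, rfl⟩
  exact ⟨_, ⟨U ∘ σ, fun i hi => hU _ (hσ i hi), rfl⟩,
    by rintro _ ⟨x, hx, rfl⟩ i hi; exact hx _ (hσ i hi)⟩

variable [TopologicalSpace X] [CompactSpace X]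

lemma coverNum_image_comp_le (h𝒰 : IsOpenCover 𝒰) (S : Set (ℕ → X)) (hσ : ∀ i < n, σ i < m) :
    coverNum ((fun x : ℕ → X => x ∘ σ) '' S) (seqCover 𝒰 n) ≤ coverNum S (seqCover 𝒰 m) :=
  coverNum_image_le _ ((isOpenCover_seqCover h𝒰 m).exists_finset_subcover S)
    (exists_seqCover_image_comp_subset hσ)

lemma monotone_coverNum_seqCover (h𝒰 : IsOpenCover 𝒰) (S : Set (ℕ → X)) :
    Monotone fun n => (coverNum S (seqCover 𝒰 n) : ℝ≥0∞) := fun n m hnm => by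
  simpa using coverNum_image_comp_le (σ := id) h𝒰 S fun i hi => hi.trans_le hnm

lemma coverNum_dilation_seqCover_mul (h𝒰 : IsOpenCover 𝒰) (S : Set (ℕ → X)) {k : ℕ}
    (hk : 0 < k) (m : ℕ) :
    coverNum ((fun x : ℕ → X => fun n => x (n / k)) '' S) (seqCover 𝒰 (k * m))
      = coverNum S (seqCover 𝒰 m) := by
  refine le_antisymm (coverNum_image_comp_le h𝒰 S fun i hi => ?_) ?_
  · exact (Nat.div_lt_iff_lt_mul hk).2 (by rwa [mul_comm])
  · have hsample : (fun y : ℕ → X => y ∘ (k * ·)) '' ((fun x : ℕ → X => fun n => x (n / k)) '' S)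
        = S := by
      simp [image_image, Function.comp_def, Nat.mul_div_cancel_left _ hk]
    calc coverNum S (seqCover 𝒰 m)
        = coverNum ((fun y : ℕ → X => y ∘ (k * ·)) '' _) (seqCover 𝒰 m) := by rw [hsample]
      _ ≤ _ := coverNum_image_comp_le h𝒰 _ fun i hi => Nat.mul_lt_mul_of_pos_left hi hk

end reindex

-- At `N = 0` both sides vanish, as `Real.log 0 = 0` and `ENNReal.log 0 = ⊥`.
lemma ofReal_mul_log_natCast_eq (N n : ℕ) :
    ENNReal.ofReal ((1 / n : ℝ) * Real.log N) = (ENNReal.log N / n).toENNReal := by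
  rcases Nat.eq_zero_or_pos N with rfl | hN
  · simpa using (EReal.toENNReal_of_nonpos
      (EReal.div_nonpos_of_nonpos_of_nonneg bot_le (by positivity))).symm
  · rw [← ENNReal.ofReal_natCast N, ENNReal.log_ofReal_of_pos (by exact_mod_cast hN),
      ← EReal.coe_natCast (n := n), ← EReal.coe_div, EReal.real_coe_toENNReal, one_div_mul_eq_div]

lemma entropyRel_eq_toENNReal_expGrowthSup {Z : Type*} (S : Set (ℕ → Z)) (𝒰 : Set (Set Z)) :
    entropyRel S 𝒰 = (expGrowthSup fun n => (coverNum S (seqCover 𝒰 n) : ℝ≥0∞)).toENNReal := by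
  simp_rw [entropyRel, ofReal_mul_log_natCast_eq, expGrowthSup]
  exact ((Monotone.map_limsup_of_continuousAt (fun _ _ => EReal.toENNReal_le_toENNReal) _
    EReal.continuous_toENNReal.continuousAt)).symm

lemma entropyRel_dilation {X : Type*} [TopologicalSpace X] [CompactSpace X]
    {𝒰 : Set (Set X)} (h𝒰 : IsOpenCover 𝒰) (S : Set (ℕ → X)) {k : ℕ} (hk : 0 < k) :
    entropyRel ((fun x : ℕ → X => fun n => x (n / k)) '' S) 𝒰 = entropyRel S 𝒰 / k := by
  have hgrowth : expGrowthSup (fun m => (coverNum S (seqCover 𝒰 m) : ℝ≥0∞))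
      = k * expGrowthSup fun n =>
          (coverNum ((fun x : ℕ → X => fun n => x (n / k)) '' S) (seqCover 𝒰 n) : ℝ≥0∞) := by
    rw [← (monotone_coverNum_seqCover h𝒰 _).expGrowthSup_comp_mul hk.ne']
    simp_rw [coverNum_dilation_seqCover_mul h𝒰 S hk]
  rw [entropyRel_eq_toENNReal_expGrowthSup, entropyRel_eq_toENNReal_expGrowthSup, hgrowth,
    EReal.toENNReal_mul (by positivity), show (k : EReal).toENNReal = k by exact_mod_cast EReal.toENNReal_coe (x := (k : ℝ≥0∞)),
    mul_comm, ENNReal.mul_div_cancel_right (by exact_mod_cast hk.ne') (ENNReal.natCast_ne_top k)]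

theorem topEntropy_dilation_general {X : Type*} [TopologicalSpace X] [CompactSpace X]
    (S : Set (ℕ → X)) (k : ℕ) (hk : 2 ≤ k) :
    topEntropy X ((fun x : ℕ → X => fun n => x (n / k)) '' S)
      = topEntropy X S / (k : ℝ≥0∞) := by
  simp_rw [topEntropy, ENNReal.iSup_div]
  exact biSup_congr fun 𝒰 h𝒰 => entropyRel_dilation h𝒰 S (by omega)

theorem topEntropy_dilation {X : Type*} [TopologicalSpace X] [CompactSpace X] [T2Space X]
    (S : Set (ℕ → X)) (k : ℕ) (hk : 2 ≤ k) :
    topEntropy X ((fun x : ℕ → X => fun n => x (n / k)) '' S)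
      = topEntropy X S / (k : ℝ≥0∞) :=
  topEntropy_dilation_general S k hk
end

section
/- Let (X,d) be a metric space and T : X → X a continuous map. Then the classical Bowen entropy of T equals the Bowen ∞-entropy of the set of orbits of T: h_d(T) = H^B_{d,∞}(Gr̄T), where Gr̄T = {(Tⁿx)_{n≥0} : x ∈ X} ⊆ X̄. -/
open Set Filter Topology
open scoped ENNReal NNReal

/-- A compatible semimetric on a topological space `Z`: a symmetric, reflexive, triangle-inequality
function `γ : Z × Z → [0,∞)` whose induced topology (generated by its open balls) is contained in
the topology of `Z`, i.e. every `γ`-ball is open in `Z`. -/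
structure IsCompatibleSemimetric (Z : Type*) [TopologicalSpace Z] (γ : Z → Z → ℝ) : Prop where
  nonneg : ∀ x y, 0 ≤ γ x y
  refl : ∀ x, γ x x = 0
  symm : ∀ x y, γ x y = γ y x
  triangle : ∀ x y z, γ x z ≤ γ x y + γ y z
  isOpen_ball : ∀ x : Z, ∀ ε : ℝ, 0 < ε → IsOpen {y | γ x y < ε}

/-- `sepNum K γ ε` : the largest cardinality `N^s(K,γ,ε)` of an `ε`-separated subset of `K`
(junk value `0` if the cardinalities are unbounded). -/
noncomputable def sepNum {Z : Type*} (K : Set Z) (γ : Z → Z → ℝ) (ε : ℝ) : ℕ :=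
  sSup {m | ∃ F : Finset Z, ↑F ⊆ K ∧ (∀ x ∈ F, ∀ y ∈ F, x ≠ y → ε ≤ γ x y) ∧ F.card = m}

/-- The Bowen entropy `H^B_Γ(K)` of a compact set `K` with respect to the sequence of semimetrics
`Γ = (γ_n)`: the limit as `ε → 0⁺` (equivalently, the supremum over `ε > 0`) of
`limsup_n (1/n) log N^s(K,γ_n,ε)`. -/
noncomputable def bowenEntropyCompact {Z : Type*} (γ : ℕ → Z → Z → ℝ) (K : Set Z) : ℝ≥0∞ :=
  ⨆ ε ∈ Set.Ioi (0 : ℝ), Filter.atTop.limsup fun n : ℕ =>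
    ENNReal.ofReal ((1 / n : ℝ) * Real.log (sepNum K (γ n) ε))

/-- The Bowen entropy `H^B_Γ(S)` of an arbitrary subset `S`: the supremum of `H^B_Γ(K)` over
compact subsets `K ⊆ S`. -/
noncomputable def bowenEntropy {Z : Type*} [TopologicalSpace Z] (γ : ℕ → Z → Z → ℝ)
    (S : Set Z) : ℝ≥0∞ :=
  ⨆ (K : Set Z) (_ : IsCompact K ∧ K ⊆ S), bowenEntropyCompact γ K

/-- The semimetric `d_{n,p}` on the sequence space `ℕ → X` (`p = ⊤` gives `d_{n,∞}`). -/
noncomputable def seqSemimetric {X : Type*} [PseudoMetricSpace X] (p : ℝ≥0∞) (n : ℕ)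
    (x y : ℕ → X) : ℝ :=
  if p = ⊤ then (((Finset.range n).sup fun i => nndist (x i) (y i) : ℝ≥0) : ℝ)
  else (∑ i ∈ Finset.range n, dist (x i) (y i) ^ p.toReal) ^ (1 / p.toReal)

/-- The Bowen `p`-entropy `H^B_{d,p}(S)` of a subset `S` of the sequence space `ℕ → X`. -/
noncomputable def bowenPEntropy {X : Type*} [PseudoMetricSpace X] (p : ℝ≥0∞)
    (S : Set (ℕ → X)) : ℝ≥0∞ :=
  bowenEntropy (fun n => seqSemimetric p n) S

/-- The set `Gr̄T` of all orbits of `T`, as a subset of the sequence space. -/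
def grBar {X : Type*} (T : X → X) : Set (ℕ → X) :=
  Set.range fun x => fun n => T^[n] x

/-- The Bowen metric `d_n(x,x') = max_{0 ≤ i ≤ n-1} d(Tⁱx, Tⁱx')` associated to a map `T`. -/
noncomputable def bowenDynMetric {X : Type*} [PseudoMetricSpace X] (T : X → X) (n : ℕ)
    (x y : X) : ℝ :=
  (((Finset.range n).sup fun i => nndist (T^[i] x) (T^[i] y) : ℝ≥0) : ℝ)

/-- The classical Bowen entropy `h_d(T)` of a continuous map `T` on a metric space. -/
noncomputable def bowenMapEntropy {X : Type*} [MetricSpace X] (T : X → X) : ℝ≥0∞ :=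
  bowenEntropy (bowenDynMetric T) (Set.univ : Set X)

theorem bowenMapEntropy_eq_bowenPEntropy_grBar {X : Type*} [MetricSpace X]
    (T : X → X) (hT : Continuous T) :
    bowenMapEntropy T = bowenPEntropy ⊤ (grBar T) := by
  classical
  set Φ : X → ℕ → X := fun x n => T^[n] x with hΦ
  have hΦcont : Continuous Φ := continuous_pi fun n => hT.iterate n
  have hzero : ∀ x, Φ x 0 = x := fun x => Function.iterate_zero_apply T x
  have hΦinj : Function.Injective Φ := fun x y h => by
    have := congrFun h 0; rwa [hzero, hzero] at this
  have hsem : ∀ n (x y : X), bowenDynMetric T n x y = seqSemimetric ⊤ n (Φ x) (Φ y) := by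
    intro n x y
    simp [bowenDynMetric, seqSemimetric, Φ]
  have hsep : ∀ (K : Set X) (n : ℕ) (ε : ℝ),
      sepNum K (bowenDynMetric T n) ε = sepNum (Φ '' K) (seqSemimetric ⊤ n) ε := by
    intro K n ε
    unfold sepNum
    congr 1
    ext m
    constructor
    · rintro ⟨F, hFK, hFsep, hFcard⟩
      refine ⟨F.image Φ, ?_, ?_, ?_⟩
      · intro y hy
        simp only [Finset.coe_image, Set.mem_image, Finset.mem_coe] at hy
        obtain ⟨x, hx, rfl⟩ := hy
        exact ⟨x, hFK hx, rfl⟩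
      · intro a ha b hb hab
        simp only [Finset.mem_image] at ha hb
        obtain ⟨x, hx, rfl⟩ := ha
        obtain ⟨y, hy, rfl⟩ := hb
        have hxy : x ≠ y := fun h => hab (by rw [h])
        rw [← hsem]
        exact hFsep x hx y hy hxy
      · rw [Finset.card_image_of_injective _ hΦinj, hFcard]
    · rintro ⟨F, hFK, hFsep, hFcard⟩
      have hfix : ∀ s ∈ F, Φ (s 0) = s ∧ s 0 ∈ K := by
        intro s hs
        obtain ⟨x, hxK, rfl⟩ := hFK hs
        exact ⟨by rw [hzero], by rw [hzero]; exact hxK⟩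
      refine ⟨F.image (fun s => s 0), ?_, ?_, ?_⟩
      · intro x hx
        simp only [Finset.coe_image, Set.mem_image, Finset.mem_coe] at hx
        obtain ⟨s, hs, rfl⟩ := hx
        exact (hfix s hs).2
      · intro a ha b hb hab
        simp only [Finset.mem_image] at ha hb
        obtain ⟨s, hs, rfl⟩ := ha
        obtain ⟨t, ht, rfl⟩ := hb
        have hst : s ≠ t := fun h => hab (by rw [h])
        rw [hsem, (hfix s hs).1, (hfix t ht).1]
        exact hFsep s hs t ht hst
      · rw [Finset.card_image_of_injOn, hFcard]
        intro s hs t ht h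
        have := congrArg Φ h
        rw [(hfix s (by simpa using hs)).1, (hfix t (by simpa using ht)).1] at this
        exact this
  have hent : ∀ K : Set X, bowenEntropyCompact (bowenDynMetric T) K
      = bowenEntropyCompact (fun n => seqSemimetric ⊤ n) (Φ '' K) := by
    intro K
    unfold bowenEntropyCompact
    simp only [hsep]
  have hrange : Set.range Φ = grBar T := rfl
  apply le_antisymm
  · refine iSup₂_le fun K hK => ?_
    rw [hent]
    exact le_iSup₂ (f := fun K' (_ : IsCompact K' ∧ K' ⊆ grBar T) =>
      bowenEntropyCompact (fun n => seqSemimetric ⊤ n) K') (Φ '' K)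
      ⟨hK.1.image hΦcont, hrange ▸ Set.image_subset_range Φ K⟩
  · refine iSup₂_le fun K' hK' => ?_
    have hKc : IsCompact ((fun s : ℕ → X => s 0) '' K') :=
      hK'.1.image (continuous_apply 0)
    have hfix : ∀ s ∈ K', Φ (s 0) = s := by
      intro s hs
      obtain ⟨x, rfl⟩ := hK'.2 hs
      show Φ ((Φ x) 0) = Φ x
      rw [hzero]
    have himg2 : Φ '' ((fun s : ℕ → X => s 0) '' K') = K' := by
      rw [Set.image_image]
      ext s
      constructor
      · rintro ⟨t, ht, rfl⟩
        show Φ (t 0) ∈ K'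
        rw [hfix t ht]; exact ht
      · intro hs
        exact ⟨s, hs, hfix s hs⟩
    calc bowenEntropyCompact (fun n => seqSemimetric ⊤ n) K'
        = bowenEntropyCompact (bowenDynMetric T) ((fun s : ℕ → X => s 0) '' K') := by
          rw [hent, himg2]
      _ ≤ _ := le_iSup₂ (f := fun K (_ : IsCompact K ∧ K ⊆ Set.univ) =>
          bowenEntropyCompact (bowenDynMetric T) K) _ ⟨hKc, Set.subset_univ _⟩
end
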